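/- arXiv:2302.07466 — 5 statements merged into one kernel-verified Lean document; each statement's English description precedes it below -/
import Mathlib

section
/- Let A ∈ ℝ^{n×n} be symmetric positive definite with condition number cond(A) = λ_max(A)/λ_min(A), let x solve Ax = b, let K_k be a subspace, and let Ω be an ε-embedding of K_k + span(x) + A(K_k + span(x)) with ε·cond(A)^{1/2} < 1. Suppose x_k ∈ K_k satisfies the sketched Petrov–Galerkin condition ⟨Ω(b - A x_k), Ω w⟩ = 0 for all w ∈ K_k, and x̆_k ∈ K_k satisfies the exact Petrov–Galerkin condition ⟨b - A x̆_k, w⟩ = 0 for all w ∈ K_k. Then ‖x - x_k‖_A ≤ ((1 + ε·cond(A)^{1/2})/(1 - ε·cond(A)^{1/2})) · ‖x - x̆_k‖_A. -/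
open RealInnerProductSpace

private lemma aCS {n : ℕ} (A : EuclideanSpace ℝ (Fin n) →ₗ[ℝ] EuclideanSpace ℝ (Fin n))
    (hsymm : ∀ u v, ⟪A u, v⟫ = ⟪u, A v⟫)
    (hpos : ∀ v, (0:ℝ) ≤ ⟪v, A v⟫) (u v : EuclideanSpace ℝ (Fin n)) :
    ⟪u, A v⟫ ≤ Real.sqrt ⟪u, A u⟫ * Real.sqrt ⟪v, A v⟫ := by
  have hsymm' : ∀ a b : EuclideanSpace ℝ (Fin n), ⟪a, A b⟫ = ⟪b, A a⟫ := fun a b => by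
    rw [← hsymm, real_inner_comm]
  have hq : ∀ t : ℝ, 0 ≤ ⟪v, A v⟫ * (t * t) + (2 * ⟪u, A v⟫) * t + ⟪u, A u⟫ := by
    intro t
    have h := hpos (u + t • v)
    have hexp : ⟪u + t • v, A (u + t • v)⟫ =
        ⟪v, A v⟫ * (t * t) + (2 * ⟪u, A v⟫) * t + ⟪u, A u⟫ := by
      rw [map_add, map_smul, inner_add_left, inner_add_right, inner_add_right,
        real_inner_smul_left, real_inner_smul_left, real_inner_smul_right,
        real_inner_smul_right, hsymm' v u]
      ring
    rw [hexp] at h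
    exact h
  have hd := discrim_le_zero hq
  rw [discrim] at hd
  have hsq : ⟪u, A v⟫ ^ 2 ≤ ⟪u, A u⟫ * ⟪v, A v⟫ := by nlinarith
  calc ⟪u, A v⟫ ≤ |⟪u, A v⟫| := le_abs_self _
    _ = Real.sqrt (⟪u, A v⟫ ^ 2) := (Real.sqrt_sq_eq_abs _).symm
    _ ≤ Real.sqrt (⟪u, A u⟫ * ⟪v, A v⟫) := Real.sqrt_le_sqrt hsq
    _ = Real.sqrt ⟪u, A u⟫ * Real.sqrt ⟪v, A v⟫ := Real.sqrt_mul (hpos u) _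

/-- The A-norm `‖v‖_A = √⟨v, A v⟩`. -/
noncomputable def anorm {n : ℕ} (A : EuclideanSpace ℝ (Fin n) →ₗ[ℝ] EuclideanSpace ℝ (Fin n))
    (v : EuclideanSpace ℝ (Fin n)) : ℝ :=
  Real.sqrt ⟪v, A v⟫

set_option maxHeartbeats 1000000 in
/-- Quasi-optimality of the sketched Petrov–Galerkin estimate (Proposition 3.2). -/
theorem sketched_galerkin_quasi_optimal
    {n ℓ : ℕ} (A : EuclideanSpace ℝ (Fin n) →ₗ[ℝ] EuclideanSpace ℝ (Fin n))
    (hsymm : ∀ u v, ⟪A u, v⟫ = ⟪u, A v⟫)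
    (lmin lmax : ℝ) (hlmin : 0 < lmin)
    (hmin : ∀ v, lmin * ‖v‖ ^ 2 ≤ ⟪v, A v⟫)
    (hmax : ∀ v, ⟪v, A v⟫ ≤ lmax * ‖v‖ ^ 2)
    (x b : EuclideanSpace ℝ (Fin n)) (hx : A x = b)
    (K : Submodule ℝ (EuclideanSpace ℝ (Fin n)))
    (ε : ℝ) (hε0 : 0 ≤ ε) (hεcond : ε * Real.sqrt (lmax / lmin) < 1)
    (Ω : EuclideanSpace ℝ (Fin n) →ₗ[ℝ] EuclideanSpace ℝ (Fin ℓ))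
    -- Ω is an ε-embedding of W = (K + span x) + A(K + span x)
    (hemb : ∀ u ∈ (K ⊔ Submodule.span ℝ {x}) ⊔
        Submodule.map A (K ⊔ Submodule.span ℝ {x}),
      ∀ v ∈ (K ⊔ Submodule.span ℝ {x}) ⊔
        Submodule.map A (K ⊔ Submodule.span ℝ {x}),
      |⟪Ω u, Ω v⟫ - ⟪u, v⟫| ≤ ε * ‖u‖ * ‖v‖)
    (xk : EuclideanSpace ℝ (Fin n)) (hxkK : xk ∈ K)
    (hsketch : ∀ w ∈ K, ⟪Ω (b - A xk), Ω w⟫ = 0)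
    (xbk : EuclideanSpace ℝ (Fin n)) (hxbkK : xbk ∈ K)
    (hexact : ∀ w ∈ K, ⟪b - A xbk, w⟫ = 0) :
    anorm A (x - xk) ≤
      (1 + ε * Real.sqrt (lmax / lmin)) / (1 - ε * Real.sqrt (lmax / lmin)) *
        anorm A (x - xbk) := by
  set t : ℝ := ε * Real.sqrt (lmax / lmin) with ht
  have ht0 : 0 ≤ t := mul_nonneg hε0 (Real.sqrt_nonneg _)
  have ht1 : 0 < 1 - t := by linarith
  have hpos : ∀ v, (0:ℝ) ≤ ⟪v, A v⟫ := fun v => le_trans (by positivity) (hmin v)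
  set e := x - xk with he
  set f := x - xbk with hf
  set w := xbk - xk with hw
  have hNe0 : 0 ≤ anorm A e := Real.sqrt_nonneg _
  have hNf0 : 0 ≤ anorm A f := Real.sqrt_nonneg _
  have hNw0 : 0 ≤ anorm A w := Real.sqrt_nonneg _
  rcases eq_or_lt_of_le hNe0 with hNe | hNe
  · rw [← hNe]; positivity
  have hee : (0:ℝ) < ⟪e, A e⟫ := Real.sqrt_pos.mp hNe
  have he0 : e ≠ 0 := by
    intro h0
    rw [h0, map_zero, inner_zero_left] at hee
    exact lt_irrefl 0 hee
  have hne2 : (0:ℝ) < ‖e‖ ^ 2 := pow_pos (norm_pos_iff.mpr he0) 2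
  have hlmax : 0 < lmax := by
    by_contra h
    push_neg at h
    have h2 : lmax * ‖e‖ ^ 2 ≤ 0 := mul_nonpos_of_nonpos_of_nonneg h (sq_nonneg _)
    linarith [hmax e]
  -- squared anorms
  have hNe2 : anorm A e ^ 2 = ⟪e, A e⟫ := Real.sq_sqrt (hpos e)
  have hNf2 : anorm A f ^ 2 = ⟪f, A f⟫ := Real.sq_sqrt (hpos f)
  have hNw2 : anorm A w ^ 2 = ⟪w, A w⟫ := Real.sq_sqrt (hpos w)
  -- decomposition e = f + w
  have hefw : e = f + w := by rw [he, hf, hw]; abel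
  -- memberships in W
  have hxS : x ∈ K ⊔ Submodule.span ℝ {x} :=
    Submodule.mem_sup_right (Submodule.mem_span_singleton_self x)
  have heS : e ∈ K ⊔ Submodule.span ℝ {x} :=
    Submodule.sub_mem _ hxS (Submodule.mem_sup_left hxkK)
  have hAeW : A e ∈ (K ⊔ Submodule.span ℝ {x}) ⊔
      Submodule.map A (K ⊔ Submodule.span ℝ {x}) :=
    Submodule.mem_sup_right ⟨e, heS, rfl⟩
  have hwW : w ∈ (K ⊔ Submodule.span ℝ {x}) ⊔
      Submodule.map A (K ⊔ Submodule.span ℝ {x}) :=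
    Submodule.mem_sup_left (Submodule.mem_sup_left (Submodule.sub_mem _ hxbkK hxkK))
  -- sketched orthogonality : ⟪Ω (A e), Ω w⟫ = 0
  have hbA : b - A xk = A e := by rw [← hx, he, map_sub]
  have hsk : ⟪Ω (A e), Ω w⟫ = 0 := by
    rw [← hbA]; exact hsketch w (Submodule.sub_mem _ hxbkK hxkK)
  -- embedding bound on ⟪A e, w⟫
  have hemb1 : |⟪A e, w⟫| ≤ ε * ‖A e‖ * ‖w‖ := by
    have h := hemb (A e) hAeW w hwW
    rw [hsk] at h
    rwa [zero_sub, abs_neg] at h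
  -- ‖A e‖ ≤ √lmax * anorm A e
  have hAe_norm : ‖A e‖ ≤ Real.sqrt lmax * anorm A e := by
    rcases eq_or_lt_of_le (norm_nonneg (A e)) with h0 | h0
    · rw [← h0]; positivity
    · have h1 : ⟪A e, A e⟫ ≤ Real.sqrt ⟪A e, A (A e)⟫ * anorm A e :=
        aCS A hsymm hpos (A e) e
      have h2 : Real.sqrt ⟪A e, A (A e)⟫ ≤ Real.sqrt lmax * ‖A e‖ := by
        calc Real.sqrt ⟪A e, A (A e)⟫ ≤ Real.sqrt (lmax * ‖A e‖ ^ 2) :=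
              Real.sqrt_le_sqrt (hmax (A e))
          _ = Real.sqrt lmax * ‖A e‖ := by
              rw [Real.sqrt_mul hlmax.le, Real.sqrt_sq (norm_nonneg _)]
      have h3 : ‖A e‖ ^ 2 = ⟪A e, A e⟫ := (real_inner_self_eq_norm_sq _).symm
      have h4 : ‖A e‖ ^ 2 ≤ Real.sqrt lmax * ‖A e‖ * anorm A e := by
        rw [h3]
        calc ⟪A e, A e⟫ ≤ Real.sqrt ⟪A e, A (A e)⟫ * anorm A e := h1
          _ ≤ Real.sqrt lmax * ‖A e‖ * anorm A e := by
              apply mul_le_mul_of_nonneg_right h2 hNe0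
      nlinarith
  -- ‖w‖ ≤ anorm A w / √lmin
  have hw_norm : Real.sqrt lmin * ‖w‖ ≤ anorm A w := by
    have h1 : lmin * ‖w‖ ^ 2 ≤ ⟪w, A w⟫ := hmin w
    have h2 : (Real.sqrt lmin * ‖w‖) ^ 2 ≤ anorm A w ^ 2 := by
      rw [mul_pow, Real.sq_sqrt hlmin.le, hNw2]; exact h1
    calc Real.sqrt lmin * ‖w‖ = Real.sqrt ((Real.sqrt lmin * ‖w‖) ^ 2) :=
          (Real.sqrt_sq (by positivity)).symm
      _ ≤ Real.sqrt (anorm A w ^ 2) := Real.sqrt_le_sqrt h2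
      _ = anorm A w := Real.sqrt_sq hNw0
  -- key bound : ⟪A e, w⟫ ≤ t * anorm A e * anorm A w
  have hkey : ⟪A e, w⟫ ≤ t * anorm A e * anorm A w := by
    have h1 : ⟪A e, w⟫ ≤ ε * ‖A e‖ * ‖w‖ := le_trans (le_abs_self _) hemb1
    have hsd : Real.sqrt (lmax / lmin) = Real.sqrt lmax / Real.sqrt lmin :=
      Real.sqrt_div hlmax.le lmin
    have hsl : 0 < Real.sqrt lmin := Real.sqrt_pos.mpr hlmin
    have h2 : ‖A e‖ * ‖w‖ ≤ Real.sqrt (lmax / lmin) * (anorm A e * anorm A w) := by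
      rw [hsd, div_mul_eq_mul_div, le_div_iff₀ hsl]
      calc ‖A e‖ * ‖w‖ * Real.sqrt lmin = ‖A e‖ * (Real.sqrt lmin * ‖w‖) := by ring
        _ ≤ (Real.sqrt lmax * anorm A e) * anorm A w := by
            apply mul_le_mul hAe_norm hw_norm (by positivity) (by positivity)
        _ = Real.sqrt lmax * (anorm A e * anorm A w) := by ring
    calc ⟪A e, w⟫ ≤ ε * ‖A e‖ * ‖w‖ := h1
      _ = ε * (‖A e‖ * ‖w‖) := by ring
      _ ≤ ε * (Real.sqrt (lmax / lmin) * (anorm A e * anorm A w)) :=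
          mul_le_mul_of_nonneg_left h2 hε0
      _ = t * anorm A e * anorm A w := by rw [ht]; ring
  -- triangle : anorm A w ≤ anorm A e + anorm A f
  have htri : anorm A w ≤ anorm A e + anorm A f := by
    have hwef : w = e - f := by rw [he, hf, hw]; abel
    have hcs : ⟪e, A (-f)⟫ ≤ anorm A e * anorm A (-f) := aCS A hsymm hpos e (-f)
    have hnf : anorm A (-f) = anorm A f := by
      rw [anorm, anorm, map_neg, inner_neg_neg]
    rw [hnf] at hcs
    have hexp : ⟪w, A w⟫ = ⟪e, A e⟫ + 2 * ⟪e, A (-f)⟫ + ⟪f, A f⟫ := by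
      rw [hwef, map_sub, map_neg, inner_sub_left, inner_sub_right, inner_sub_right,
        inner_neg_right]
      have : ⟪f, A e⟫ = ⟪e, A f⟫ := by rw [← hsymm, real_inner_comm]
      rw [this]; ring
    have h2 : anorm A w ^ 2 ≤ (anorm A e + anorm A f) ^ 2 := by
      have hring : (anorm A e + anorm A f) ^ 2 =
          anorm A e ^ 2 + 2 * (anorm A e * anorm A f) + anorm A f ^ 2 := by ring
      rw [hNw2, hexp, hring]
      linarith [hNe2, hNf2, hcs]
    calc anorm A w = Real.sqrt (anorm A w ^ 2) := (Real.sqrt_sq hNw0).symm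
      _ ≤ Real.sqrt ((anorm A e + anorm A f) ^ 2) := Real.sqrt_le_sqrt h2
      _ = anorm A e + anorm A f := Real.sqrt_sq (by positivity)
  -- main inequality
  have hmain : ⟪e, A e⟫ ≤ anorm A e * anorm A f + t * anorm A e * anorm A w := by
    have hsplit : ⟪e, A e⟫ = ⟪e, A f⟫ + ⟪A e, w⟫ := by
      calc ⟪e, A e⟫ = ⟪e, A (f + w)⟫ := by rw [← hefw]
        _ = ⟪e, A f⟫ + ⟪e, A w⟫ := by rw [map_add, inner_add_right]
        _ = ⟪e, A f⟫ + ⟪A e, w⟫ := by rw [hsymm]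
    have hcsef : ⟪e, A f⟫ ≤ anorm A e * anorm A f := aCS A hsymm hpos e f
    rw [hsplit]
    exact add_le_add hcsef hkey
  have hstep : anorm A e ^ 2 ≤
      anorm A e * anorm A f + t * anorm A e * (anorm A e + anorm A f) := by
    have hmul : t * anorm A e * anorm A w ≤ t * anorm A e * (anorm A e + anorm A f) :=
      mul_le_mul_of_nonneg_left htri (mul_nonneg ht0 hNe0)
    linarith [hmain, hNe2, hmul]
  have hfinal : (1 - t) * anorm A e ≤ (1 + t) * anorm A f := by
    have hmul2 : anorm A e * ((1 - t) * anorm A e) ≤ anorm A e * ((1 + t) * anorm A f) := by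
      nlinarith [hstep]
    exact le_of_mul_le_mul_left hmul2 hNe
  rw [div_mul_eq_mul_div, le_div_iff₀ ht1]
  linarith [hfinal]
end

section
/- Let A be symmetric positive definite, x solve Ax = b, x_k ∈ K_k the sketched Petrov–Galerkin estimate and x̆_k ∈ K_k the exact Petrov–Galerkin estimate. Then ⟨x_k - x̆_k, A(x_k - x̆_k)⟩ = ⟨x_k - x̆_k, (I - P^Ω)A(x_k - x)⟩, where P^Ω is the sketched orthogonal projector onto K_k (satisfying ⟨Ω(z - P^Ω z), Ω w⟩ = 0 for all w ∈ K_k). -/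
open RealInnerProductSpace

/-- First step of the proof of the refined quasi-optimality bound:
`⟨x_k - x̆_k, A(x_k - x̆_k)⟩ = ⟨x_k - x̆_k, (I - P^Ω) A (x_k - x)⟩`. -/
theorem sketched_galerkin_key_identity
    {n ℓ : ℕ} (A : EuclideanSpace ℝ (Fin n) →ₗ[ℝ] EuclideanSpace ℝ (Fin n))
    (hsymm : ∀ u v, ⟪A u, v⟫ = ⟪u, A v⟫)
    (x b : EuclideanSpace ℝ (Fin n)) (hx : A x = b)
    (K : Submodule ℝ (EuclideanSpace ℝ (Fin n)))
    (Ω : EuclideanSpace ℝ (Fin n) →ₗ[ℝ] EuclideanSpace ℝ (Fin ℓ))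
    (hinj : ∀ w ∈ K, Ω w = 0 → w = 0)
    -- P is the sketched orthogonal projector onto K
    (P : EuclideanSpace ℝ (Fin n) →ₗ[ℝ] EuclideanSpace ℝ (Fin n))
    (hPrange : ∀ z, P z ∈ K)
    (hPproj : ∀ z, ∀ w ∈ K, ⟪Ω (z - P z), Ω w⟫ = 0)
    (xk : EuclideanSpace ℝ (Fin n)) (hxkK : xk ∈ K)
    (hsketch : ∀ w ∈ K, ⟪Ω (b - A xk), Ω w⟫ = 0)
    (xbk : EuclideanSpace ℝ (Fin n)) (hxbkK : xbk ∈ K)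
    (hexact : ∀ w ∈ K, ⟪b - A xbk, w⟫ = 0) :
    ⟪xk - xbk, A (xk - xbk)⟫ = ⟪xk - xbk, A (xk - x) - P (A (xk - x))⟫ := by
  set z := A (xk - x) with hz
  have hPz0 : P z = 0 := by
    have h1 : ∀ w ∈ K, ⟪Ω (P z), Ω w⟫ = 0 := by
      intro w hw
      have h2 := hPproj z w hw
      have h3 : ⟪Ω z, Ω w⟫ = (0 : ℝ) := by
        have hneg : Ω z = - Ω (b - A xk) := by
          rw [hz, map_sub, hx, map_sub, map_sub]; abel
        rw [hneg, inner_neg_left, hsketch w hw, neg_zero]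
      rw [map_sub, inner_sub_left, h3] at h2
      linarith
    have h5 : Ω (P z) = 0 := inner_self_eq_zero.mp (h1 (P z) (hPrange z))
    exact hinj _ (hPrange z) h5
  rw [hPz0, sub_zero]
  have hd : xk - xbk ∈ K := K.sub_mem hxkK hxbkK
  have h0 : ⟪xk - xbk, b - A xbk⟫ = (0 : ℝ) := by
    rw [real_inner_comm]; exact hexact _ hd
  have hsplit : A (xk - xbk) = z + (b - A xbk) := by
    rw [hz, map_sub, map_sub, hx]; abel
  rw [hsplit, inner_add_right, h0, add_zero]
end

section
/- Let A ∈ ℝ^{n×n} be symmetric with exactly ℓ + q distinct eigenvalues, where q ≥ 1. If Ω ∈ ℝ^{ℓ×n} is any matrix such that ΩᵀΩ commutes with A, then there exist at least q mutually orthogonal eigenvectors of A lying in the kernel of Ω. -/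
open RealInnerProductSpace

/-- If A is symmetric with exactly ℓ + q distinct eigenvalues (q ≥ 1) and ΩᵀΩ
commutes with A, then at least q mutually orthogonal eigenvectors of A lie in ker Ω. -/
theorem eigenvectors_in_kernel_of_commuting
    {n ℓ q : ℕ} (hq : 1 ≤ q)
    (A : EuclideanSpace ℝ (Fin n) →ₗ[ℝ] EuclideanSpace ℝ (Fin n))
    (hsymm : ∀ u v, ⟪A u, v⟫ = ⟪u, A v⟫)
    (heig : {μ : ℝ | Module.End.HasEigenvalue A μ}.ncard = ℓ + q)
    (Ω : EuclideanSpace ℝ (Fin n) →ₗ[ℝ] EuclideanSpace ℝ (Fin ℓ))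
    (hcomm : (LinearMap.adjoint Ω ∘ₗ Ω) ∘ₗ A = A ∘ₗ (LinearMap.adjoint Ω ∘ₗ Ω)) :
    ∃ p : Fin q → EuclideanSpace ℝ (Fin n),
      (∀ i, p i ≠ 0) ∧
      (∀ i, ∃ μ : ℝ, A (p i) = μ • p i) ∧
      (∀ i, Ω (p i) = 0) ∧
      (∀ i j, i ≠ j → ⟪p i, p j⟫ = 0) := by
  classical
  -- the set of eigenvalues is finite
  have hfin : {μ : ℝ | Module.End.HasEigenvalue A μ}.Finite :=
    Set.finite_of_ncard_ne_zero (by omega)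
  set E : Finset ℝ := hfin.toFinset with hE
  have hEcard : E.card = ℓ + q := by
    rw [← heig, Set.ncard_eq_toFinset_card _ hfin]
  have hEmem : ∀ μ, μ ∈ E ↔ Module.End.HasEigenvalue A μ := by
    intro μ; simp [hE]
  -- choose an eigenvector for each eigenvalue
  have hvex : ∀ μ : ℝ, ∃ v : EuclideanSpace ℝ (Fin n),
      Module.End.HasEigenvalue A μ → (A v = μ • v ∧ v ≠ 0) := by
    intro μ
    by_cases h : Module.End.HasEigenvalue A μ
    · obtain ⟨v, hv⟩ := h.exists_hasEigenvector
      exact ⟨v, fun _ => ⟨hv.apply_eq_smul, hv.right⟩⟩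
    · exact ⟨0, fun h' => absurd h' h⟩
  choose v hv using hvex
  -- eigenvectors for distinct eigenvalues are orthogonal
  have orth : ∀ (μ ν : ℝ) (u w : EuclideanSpace ℝ (Fin n)), μ ≠ ν →
      A u = μ • u → A w = ν • w → ⟪u, w⟫ = 0 := by
    intro μ ν u w hμν hu hw
    have h1 : ⟪A u, w⟫ = ⟪u, A w⟫ := hsymm u w
    rw [hu, hw, real_inner_smul_left, real_inner_smul_right] at h1
    have h2 : (μ - ν) * ⟪u, w⟫ = 0 := by ring_nf; linarith
    rcases mul_eq_zero.mp h2 with h | h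
    · exact absurd (sub_eq_zero.mp h) hμν
    · exact h
  -- ΩᵀΩ maps each eigenspace into itself
  have comm : ∀ (μ : ℝ) (u : EuclideanSpace ℝ (Fin n)), A u = μ • u →
      A ((LinearMap.adjoint Ω) (Ω u)) = μ • ((LinearMap.adjoint Ω) (Ω u)) := by
    intro μ u hu
    have := congrFun (congrArg DFunLike.coe hcomm) u
    simp only [LinearMap.comp_apply] at this
    rw [hu] at this
    simpa [map_smul] using this.symm
  -- hence Ω-images of eigenvectors for distinct eigenvalues are orthogonal
  have orthΩ : ∀ μ ∈ E, ∀ ν ∈ E, μ ≠ ν → ⟪Ω (v μ), Ω (v ν)⟫ = 0 := by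
    intro μ hμ ν hν hμν
    have hu := (hv μ ((hEmem μ).mp hμ)).1
    have hw := (hv ν ((hEmem ν).mp hν)).1
    have : ⟪(LinearMap.adjoint Ω) (Ω (v μ)), v ν⟫ = 0 :=
      orth μ ν _ _ hμν (comm μ _ hu) hw
    rwa [LinearMap.adjoint_inner_left] at this
  -- at most ℓ of the Ω-images are nonzero
  set T : Finset ℝ := E.filter (fun μ => Ω (v μ) ≠ 0) with hT
  have hTcard : T.card ≤ ℓ := by
    set f : {μ : ℝ // μ ∈ T} → EuclideanSpace ℝ (Fin ℓ) :=
      fun μ => (‖Ω (v μ.1)‖⁻¹ : ℝ) • Ω (v μ.1) with hf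
    have hne : ∀ μ : {μ : ℝ // μ ∈ T}, Ω (v μ.1) ≠ 0 := fun μ =>
      (Finset.mem_filter.mp μ.2).2
    have hmemE : ∀ μ : {μ : ℝ // μ ∈ T}, (μ : ℝ) ∈ E := fun μ =>
      (Finset.mem_filter.mp μ.2).1
    have hon : Orthonormal ℝ f := by
      rw [orthonormal_iff_ite]
      intro i j
      by_cases hij : i = j
      · subst hij
        have h0 : ‖Ω (v i.1)‖ ≠ 0 := norm_ne_zero_iff.mpr (hne i)
        rw [if_pos rfl, hf]
        rw [real_inner_smul_left, real_inner_smul_right,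
          real_inner_self_eq_norm_mul_norm]
        field_simp
      · rw [if_neg hij]
        have hij' : (i : ℝ) ≠ (j : ℝ) := fun h => hij (Subtype.ext h)
        simp only [hf, real_inner_smul_left, real_inner_smul_right,
          orthΩ _ (hmemE i) _ (hmemE j) hij', mul_zero]
    have hli := hon.linearIndependent
    have := hli.fintype_card_le_finrank
    rwa [finrank_euclideanSpace_fin, Fintype.card_coe] at this
  -- so at least q eigenvalues have Ω-image zero
  set S : Finset ℝ := E \ T with hS
  have hScard : q ≤ S.card := by
    have hsub : T ⊆ E := Finset.filter_subset _ _
    have h1 : S.card = E.card - T.card := Finset.card_sdiff_of_subset hsub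
    omega
  -- pick q of them
  let iso := S.orderIsoOfFin rfl
  let e : Fin q → ℝ := fun i => (iso (Fin.castLE hScard i) : ℝ)
  have he_inj : Function.Injective e := by
    intro i j h
    exact Fin.castLE_injective _ (iso.injective (Subtype.ext h))
  have he_memS : ∀ i, e i ∈ S := fun i => (iso (Fin.castLE hScard i)).2
  have he_memE : ∀ i, e i ∈ E := fun i => (Finset.mem_sdiff.mp (he_memS i)).1
  have he_eig : ∀ i, Module.End.HasEigenvalue A (e i) := fun i =>
    (hEmem _).mp (he_memE i)
  refine ⟨fun i => v (e i), ?_, ?_, ?_, ?_⟩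
  · exact fun i => (hv _ (he_eig i)).2
  · exact fun i => ⟨e i, (hv _ (he_eig i)).1⟩
  · intro i
    have := (Finset.mem_sdiff.mp (he_memS i)).2
    by_contra h
    exact this (Finset.mem_filter.mpr ⟨he_memE i, h⟩)
  · intro i j hij
    exact orth (e i) (e j) _ _ (fun h => hij (he_inj h))
      (hv _ (he_eig i)).1 (hv _ (he_eig j)).1
end

section
/- With notation as in the randomized and deterministic Arnoldi residual identities, if Ω is an ε-embedding (0 ≤ ε < 1) of span{v_{k+1}, v̆_{k+1}, r_0} with ‖Ω v_{k+1}‖ = 1 and ‖v̆_{k+1}‖ = 1, then ‖r_k‖₂ ≤ ‖r̆_k‖₂ + ‖r_0‖ ( |s̆_{k,1}| + √((1+ε)/(1-ε)) |s_{k,1}| ), where r_k = b - A x_k, r̆_k = b - A x̆_k, A x_k = r_0 + ‖Ωr_0‖ s_{k,1} v_{k+1} and A x̆_k = r_0 + ‖r_0‖ s̆_{k,1} v̆_{k+1}. -/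
open RealInnerProductSpace

/-- A posteriori comparison of the randomized and deterministic Arnoldi residuals
(Proposition 3.6, second bound). -/
theorem randomized_arnoldi_residual_comparison
    {n ℓ : ℕ} (ε : ℝ) (hε0 : 0 ≤ ε) (hε1 : ε < 1)
    (A : EuclideanSpace ℝ (Fin n) →ₗ[ℝ] EuclideanSpace ℝ (Fin n))
    (Ω : EuclideanSpace ℝ (Fin n) →ₗ[ℝ] EuclideanSpace ℝ (Fin ℓ))
    (b xk xbk vk1 vbk1 : EuclideanSpace ℝ (Fin n)) (s sb : ℝ)
    -- Ω is an ε-embedding of span{v_{k+1}, v̆_{k+1}, r₀} (here r₀ = b since x₀ = 0)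
    (hemb : ∀ u ∈ Submodule.span ℝ ({vk1, vbk1, b} : Set (EuclideanSpace ℝ (Fin n))),
      (1 - ε) * ‖u‖ ^ 2 ≤ ‖Ω u‖ ^ 2 ∧ ‖Ω u‖ ^ 2 ≤ (1 + ε) * ‖u‖ ^ 2)
    (hv : ‖Ω vk1‖ = 1) (hvb : ‖vbk1‖ = 1)
    -- randomized and deterministic Arnoldi residual identities (x₀ = 0, r₀ = b)
    (hrand : A xk = b + (‖Ω b‖ * s) • vk1)
    (hdet : A xbk = b + (‖b‖ * sb) • vbk1) :
    ‖b - A xk‖ ≤ ‖b - A xbk‖ +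
      ‖b‖ * (|sb| + Real.sqrt ((1 + ε) / (1 - ε)) * |s|) := by
  have h1ε : (0:ℝ) < 1 - ε := by linarith
  have hbmem : b ∈ Submodule.span ℝ ({vk1, vbk1, b} : Set (EuclideanSpace ℝ (Fin n))) :=
    Submodule.subset_span (by simp)
  have hvmem : vk1 ∈ Submodule.span ℝ ({vk1, vbk1, b} : Set (EuclideanSpace ℝ (Fin n))) :=
    Submodule.subset_span (by simp)
  have hΩb : ‖Ω b‖ ^ 2 ≤ (1 + ε) * ‖b‖ ^ 2 := (hemb b hbmem).2
  have hvk : (1 - ε) * ‖vk1‖ ^ 2 ≤ 1 := by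
    have := (hemb vk1 hvmem).1; rw [hv] at this; simpa using this
  -- ‖b - A xk‖ = ‖Ω b‖ * |s| * ‖vk1‖
  have hLHS : ‖b - A xk‖ = ‖Ω b‖ * |s| * ‖vk1‖ := by
    rw [hrand]
    have : b - (b + (‖Ω b‖ * s) • vk1) = -((‖Ω b‖ * s) • vk1) := by abel
    rw [this, norm_neg, norm_smul, Real.norm_eq_abs, abs_mul, abs_of_nonneg (norm_nonneg _),
      mul_assoc]
  have hRHS0 : 0 ≤ ‖b - A xbk‖ + ‖b‖ * |sb| := by positivity
  have key : ‖Ω b‖ * |s| * ‖vk1‖ ≤ ‖b‖ * (Real.sqrt ((1 + ε) / (1 - ε)) * |s|) := by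
    have hΩb' : ‖Ω b‖ ≤ Real.sqrt (1 + ε) * ‖b‖ := by
      have h := Real.sqrt_le_sqrt hΩb
      rwa [Real.sqrt_sq (norm_nonneg _), Real.sqrt_mul (by linarith), Real.sqrt_sq (norm_nonneg _)] at h
    have hvk' : ‖vk1‖ ≤ 1 / Real.sqrt (1 - ε) := by
      rw [le_div_iff₀ (Real.sqrt_pos.mpr h1ε)]
      have : ‖vk1‖ ^ 2 ≤ 1 / (1 - ε) := by
        rw [le_div_iff₀ h1ε]; linarith [hvk]
      have h2 := Real.sqrt_le_sqrt this
      rw [Real.sqrt_sq (norm_nonneg _)] at h2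
      calc ‖vk1‖ * Real.sqrt (1 - ε) ≤ Real.sqrt (1 / (1 - ε)) * Real.sqrt (1 - ε) := by
            exact mul_le_mul_of_nonneg_right h2 (Real.sqrt_nonneg _)
        _ = Real.sqrt (1 / (1 - ε) * (1 - ε)) := (Real.sqrt_mul (by positivity) _).symm
        _ = 1 := by rw [one_div_mul_cancel (ne_of_gt h1ε), Real.sqrt_one]
    have hsq : Real.sqrt (1 + ε) * (1 / Real.sqrt (1 - ε)) = Real.sqrt ((1 + ε) / (1 - ε)) := by
      rw [Real.sqrt_div (by linarith : (0:ℝ) ≤ 1 + ε)]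
      ring
    calc ‖Ω b‖ * |s| * ‖vk1‖ ≤ (Real.sqrt (1 + ε) * ‖b‖) * |s| * (1 / Real.sqrt (1 - ε)) := by
          apply mul_le_mul (mul_le_mul_of_nonneg_right hΩb' (abs_nonneg _)) hvk' (norm_nonneg _)
          positivity
      _ = ‖b‖ * (Real.sqrt ((1 + ε) / (1 - ε)) * |s|) := by rw [← hsq]; ring
  rw [hLHS]
  calc ‖Ω b‖ * |s| * ‖vk1‖ ≤ ‖b‖ * (Real.sqrt ((1 + ε) / (1 - ε)) * |s|) := key
    _ ≤ ‖b - A xbk‖ + ‖b‖ * (|sb| + Real.sqrt ((1 + ε) / (1 - ε)) * |s|) := by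
        have : 0 ≤ ‖b‖ * |sb| := by positivity
        nlinarith [norm_nonneg (b - A xbk)]
end

section
/- With x_0 = 0 and A x_k = r_0 + ‖Ω r_0‖ s_{k,1} v_{k+1}, if Ω is an ε-embedding of span{r_0} ∪ span{v_{k+1}} with ‖Ω v_{k+1}‖ = 1, then ‖r_k‖₂ = ‖b - A x_k‖₂ ≤ (1+ε)/√(1-ε) · ‖r_0‖ · |s_{k,1}| ; in particular ‖r_k‖₂ ≤ (1+ε)‖Ωr_0‖·|s_{k,1}|/√(1-ε) ≤ ((1+ε)/√(1-ε))|s_{k,1}|‖b‖. -/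
open RealInnerProductSpace

/-- A posteriori bound on the randomized Arnoldi residual (Proposition 3.6,
first bound, with x₀ = 0 so r₀ = b). -/
theorem randomized_arnoldi_residual_bound
    {n ℓ : ℕ} (ε : ℝ) (hε0 : 0 ≤ ε) (hε1 : ε < 1)
    (A : EuclideanSpace ℝ (Fin n) →ₗ[ℝ] EuclideanSpace ℝ (Fin n))
    (Ω : EuclideanSpace ℝ (Fin n) →ₗ[ℝ] EuclideanSpace ℝ (Fin ℓ))
    (b xk vk1 : EuclideanSpace ℝ (Fin n)) (s : ℝ)
    -- Ω is an ε-embedding of span{r₀, v_{k+1}}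
    (hemb : ∀ u ∈ Submodule.span ℝ ({b, vk1} : Set (EuclideanSpace ℝ (Fin n))),
      (1 - ε) * ‖u‖ ^ 2 ≤ ‖Ω u‖ ^ 2 ∧ ‖Ω u‖ ^ 2 ≤ (1 + ε) * ‖u‖ ^ 2)
    (hv : ‖Ω vk1‖ = 1)
    -- randomized Arnoldi residual identity with x₀ = 0, r₀ = b
    (hrand : A xk = b + (‖Ω b‖ * s) • vk1) :
    ‖b - A xk‖ ≤ (1 + ε) * ‖Ω b‖ * |s| / Real.sqrt (1 - ε) ∧
    ‖b - A xk‖ ≤ (1 + ε) / Real.sqrt (1 - ε) * ‖b‖ * |s| := by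
  have hεpos : (0:ℝ) < 1 - ε := by linarith
  have hs : Real.sqrt (1 - ε) > 0 := Real.sqrt_pos.mpr hεpos
  -- residual norm
  have hres : ‖b - A xk‖ = ‖Ω b‖ * |s| * ‖vk1‖ := by
    rw [hrand]
    have : b - (b + (‖Ω b‖ * s) • vk1) = -((‖Ω b‖ * s) • vk1) := by abel
    rw [this, norm_neg, norm_smul, Real.norm_eq_abs, abs_mul, abs_norm]
  -- bound on ‖vk1‖
  have hmemv : vk1 ∈ Submodule.span ℝ ({b, vk1} : Set (EuclideanSpace ℝ (Fin n))) :=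
    Submodule.subset_span (by simp)
  have hmemb : b ∈ Submodule.span ℝ ({b, vk1} : Set (EuclideanSpace ℝ (Fin n))) :=
    Submodule.subset_span (by simp)
  have h1 := (hemb vk1 hmemv).1
  rw [hv] at h1
  have hvk1 : ‖vk1‖ ≤ 1 / Real.sqrt (1 - ε) := by
    rw [le_div_iff₀ hs]
    have h2 : (‖vk1‖ * Real.sqrt (1 - ε))^2 ≤ 1 := by
      rw [mul_pow, Real.sq_sqrt hεpos.le]
      nlinarith [h1]
    nlinarith [mul_nonneg (norm_nonneg vk1) hs.le, sq_nonneg (‖vk1‖ * Real.sqrt (1-ε) - 1)]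
  -- bound on ‖Ω b‖
  have h3 := (hemb b hmemb).2
  have hΩb : ‖Ω b‖ ≤ (1 + ε) * ‖b‖ := by
    have h4 : ‖Ω b‖ ^ 2 ≤ ((1 + ε) * ‖b‖) ^ 2 := by
      nlinarith [mul_nonneg hε0 (mul_nonneg (by linarith : (0:ℝ) ≤ 1 + ε) (sq_nonneg ‖b‖)),
        mul_nonneg hε0 (sq_nonneg ‖b‖)]
    have h5 := Real.sqrt_le_sqrt h4
    rwa [Real.sqrt_sq (norm_nonneg _), Real.sqrt_sq (by positivity)] at h5
  have key : ‖b - A xk‖ ≤ ‖Ω b‖ * |s| / Real.sqrt (1 - ε) := by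
    rw [hres, div_eq_mul_inv, ← one_div]
    exact mul_le_mul_of_nonneg_left hvk1 (mul_nonneg (norm_nonneg _) (abs_nonneg s))
  constructor
  · refine key.trans ?_
    gcongr
    nlinarith [norm_nonneg (Ω b), abs_nonneg s,
      mul_nonneg hε0 (mul_nonneg (norm_nonneg (Ω b)) (abs_nonneg s))]
  · refine key.trans ?_
    have heq : (1 + ε) / Real.sqrt (1 - ε) * ‖b‖ * |s|
        = (1 + ε) * ‖b‖ * |s| / Real.sqrt (1 - ε) := by ring
    rw [heq]
    gcongr
end
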